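/- arXiv:1301.7741 — 8 statements merged into one kernel-verified Lean document; each statement's English description precedes it below -/
import Mathlib

section
/- Let n ≥ 1 and let α₁, …, αₙ be distinct positive even integers. If F = diag(f₁, …, fₙ) is any real diagonal matrix such that det(s·Iₙ − B·F) = ∏_{i=1}^n (s − (αᵢ² − 1)) as polynomials in s, then fᵢ > 0 for every i = 1, …, n (i.e., F is positive definite). -/
/-!
Write `B = Dᵀ D + (1/n) eₙ eₙᵀ`, where `D` is the backward-difference matrix; `D` is unitriangular,
so `B` is positive definite and factors as `B = R⋆ R` with `R` invertible. Then
`BF = R⋆ (R F)` has the same characteristic polynomial as the Hermitian matrix `R F R⋆`, whose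
eigenvalues are therefore the numbers `αᵢ² - 1 > 0`. So `R F R⋆` is positive definite, and hence
so is its congruent `F`.
-/

open Matrix Polynomial

noncomputable section

/-- The `n × n` tridiagonal matrix `B` of the Marx generator. -/
def marxB (n : ℕ) : Matrix (Fin n) (Fin n) ℝ :=
  Matrix.of fun i j =>
    if i = j then (if (i : ℕ) = n - 1 then ((n : ℝ) + 1) / n else 2)
    else if (i : ℕ) + 1 = (j : ℕ) ∨ (j : ℕ) + 1 = (i : ℕ) then -1 else 0

namespace Matrix

open scoped ComplexOrder

variable {ι 𝕜 : Type*} [Fintype ι] [DecidableEq ι] [RCLike 𝕜]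

theorem IsHermitian.posDef_of_charpoly_eq_prod {S : Matrix ι ι 𝕜} (hS : S.IsHermitian)
    {μ : ι → ℝ} (hμ : ∀ i, 0 < μ i) (h : S.charpoly = ∏ i, (X - C (μ i : 𝕜))) : S.PosDef := by
  refine hS.posDef_iff_eigenvalues_pos.mpr fun i => ?_
  have hroot : (∏ j, (X - C (μ j : 𝕜))).IsRoot (hS.eigenvalues i : 𝕜) := by
    rw [← h, hS.charpoly_eq, IsRoot, eval_prod]
    exact Finset.prod_eq_zero (Finset.mem_univ i) (by simp)
  simp only [IsRoot, eval_prod, eval_sub, eval_X, eval_C, Finset.prod_eq_zero_iff,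
    Finset.mem_univ, true_and, sub_eq_zero, RCLike.ofReal_inj] at hroot
  obtain ⟨j, hj⟩ := hroot
  exact hj ▸ hμ j

open scoped MatrixOrder in
theorem PosDef.of_charpoly_mul_eq_prod {B F : Matrix ι ι 𝕜} (hB : B.PosDef) (hF : F.IsHermitian)
    {μ : ι → ℝ} (hμ : ∀ i, 0 < μ i) (h : (B * F).charpoly = ∏ i, (X - C (μ i : 𝕜))) :
    F.PosDef := by
  obtain ⟨R, hR, rfl⟩ :=
    CStarAlgebra.isStrictlyPositive_iff_eq_star_mul_self.mp hB.isStrictlyPositive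
  have hS : (R * F * star R).IsHermitian := isHermitian_mul_mul_conjTranspose R hF
  refine hR.posDef_star_right_conjugate_iff.mp (hS.posDef_of_charpoly_eq_prod hμ ?_)
  rw [← h, mul_assoc (star R), charpoly_mul_comm (star R)]

end Matrix

def backwardDiff (n : ℕ) : Matrix (Fin n) (Fin n) ℝ :=
  of fun i j => if i = j then 1 else if (i : ℕ) = j + 1 then -1 else 0

theorem det_backwardDiff (n : ℕ) : (backwardDiff n).det = 1 := by
  rw [det_of_isLowerTriangular]
  · simp [backwardDiff]
  · intro i j (hij : i < j)
    have : (i : ℕ) < j := hij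
    simp only [backwardDiff, of_apply, Fin.ext_iff]
    split_ifs <;> first | rfl | omega

theorem transpose_backwardDiff_mul_self_apply {n : ℕ} (i j : Fin n) :
    ((backwardDiff n)ᵀ * backwardDiff n) i j =
      if i = j then (if (i : ℕ) + 1 < n then 2 else 1)
      else if (i : ℕ) + 1 = j ∨ (j : ℕ) + 1 = i then -1 else 0 := by
  let d : ℕ → ℝ := fun k => if k = i then 1 else if k = i + 1 then -1 else 0
  let e : ℕ → ℝ := fun k => if k = j then 1 else if k = j + 1 then -1 else 0
  -- column `i` of the backward-difference matrix is `eᵢ - eᵢ₊₁`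
  have hcolumn : ∀ k, d k * e k =
      (if k = i then e i else 0) + (if k = i + 1 then -e (i + 1) else 0) := by
    intro k
    simp only [d]
    split_ifs <;> first | omega | (subst_vars; ring1)
  rw [mul_apply]
  simp only [transpose_apply, backwardDiff, of_apply, Fin.ext_iff]
  change ∑ k : Fin n, d k * e k = _
  rw [Fin.sum_univ_eq_sum_range (fun k => d k * e k), Finset.sum_congr rfl fun k _ => hcolumn k,
    Finset.sum_add_distrib, Finset.sum_ite_eq', Finset.sum_ite_eq']
  simp only [e, Finset.mem_range, i.isLt, if_true]
  split_ifs <;> first | omega | ring1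

theorem marxB_eq_conjTranspose_mul_add_diagonal (n : ℕ) :
    marxB n = (backwardDiff n)ᴴ * backwardDiff n +
      diagonal fun i : Fin n => if (i : ℕ) = n - 1 then 1 / (n : ℝ) else 0 := by
  ext i j
  rw [conjTranspose_eq_transpose_of_trivial, Matrix.add_apply,
    transpose_backwardDiff_mul_self_apply]
  have hn : (n : ℝ) ≠ 0 := by have := i.pos; positivity
  simp only [marxB, of_apply, diagonal_apply, Fin.ext_iff]
  split_ifs <;> first | omega | ring1 | field_simp

theorem posDef_marxB (n : ℕ) : (marxB n).PosDef := by
  rw [marxB_eq_conjTranspose_mul_add_diagonal]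
  refine (PosDef.conjTranspose_mul_self _ ?_).add_posSemidef
    (posSemidef_diagonal_iff.mpr fun i => ?_)
  · exact mulVec_injective_of_isUnit ((isUnit_iff_isUnit_det _).mpr (by simp [det_backwardDiff]))
  · split_ifs <;> positivity

theorem statement1_general (n : ℕ) (α : Fin n → ℕ)
    (hpos : ∀ i, 0 < α i) (heven : ∀ i, Even (α i))
    (f : Fin n → ℝ)
    (hspec : (marxB n * Matrix.diagonal f).charpoly
      = ∏ i, (Polynomial.X - Polynomial.C ((α i : ℝ) ^ 2 - 1))) :
    ∀ i, 0 < f i := by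
  have hμ : ∀ i, 0 < (α i : ℝ) ^ 2 - 1 := fun i => by
    have : (2 : ℝ) ≤ α i := by
      obtain ⟨r, hr⟩ := heven i
      exact_mod_cast (show 2 ≤ α i by have := hpos i; omega)
    nlinarith
  exact posDef_diagonal_iff.mp <|
    (posDef_marxB n).of_charpoly_mul_eq_prod (isHermitian_diagonal f) hμ hspec

/-- Lemma 1 of the paper: any real diagonal matrix `F = diag f`
solving the structured eigenvalue assignment `σ(BF) = {αᵢ² - 1}` with the `αᵢ`
distinct positive even integers is positive definite, i.e. all `fᵢ > 0`. -/
theorem statement1 (n : ℕ) (hn : 1 ≤ n) (α : Fin n → ℕ)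
    (hdist : Function.Injective α) (hpos : ∀ i, 0 < α i) (heven : ∀ i, Even (α i))
    (f : Fin n → ℝ)
    (hspec : (marxB n * Matrix.diagonal f).charpoly
      = ∏ i, (Polynomial.X - Polynomial.C ((α i : ℝ) ^ 2 - 1))) :
    ∀ i, 0 < f i :=
  statement1_general n α hpos heven f hspec

end
end

section
/- Let n ≥ 1 and let α₁, …, αₙ be distinct positive even integers. If k = (k₁, …, kₙ) ∈ ℝⁿ and K = diag(k₁, …, kₙ) satisfy det(s·Iₙ − K·B^{−1}) = ∏_{i=1}^n (s − (αᵢ² − 1)^{−1}) as polynomials in s, then k₁ + k₂ + ⋯ + kₙ < 1. -/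
/-!
Indexing from `0`, the inverse of `B` is `C i j = (min i j + 1) (2n - max i j - 1) / (2n)`, the Green's
function of the second difference operator with the boundary conditions encoded by `B`. It is a
Gram matrix, hence positive definite, so `C^(1/2) K C^(1/2)` is congruent to `K` and has the
spectrum `{(αᵢ² - 1)⁻¹}` of `K C`, which is positive: thus every `kⱼ ≥ 0`. Taking traces,
`∑ kⱼ Cⱼⱼ = ∑ (αᵢ² - 1)⁻¹ < ∑_{m ≥ 1} 1 / (4m² - 1) = 1/2`, and `Cⱼⱼ ≥ 1/2` gives `∑ kⱼ < 1`.
-/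

open Matrix Polynomial

noncomputable section

section

open Finset

theorem inv_sq_sub_one_nonneg {a : ℕ} (ha : 0 < a) : 0 ≤ ((a : ℝ) ^ 2 - 1)⁻¹ := by
  have : (1 : ℝ) ≤ a := by exact_mod_cast ha
  exact inv_nonneg.mpr (by nlinarith)

theorem sum_Icc_inv_two_mul_sq_sub_one (N : ℕ) :
    ∑ b ∈ Icc 1 N, ((2 * b : ℝ) ^ 2 - 1)⁻¹ = (N : ℝ) / (2 * N + 1) := by
  induction N with
  | zero => simp
  | succ N ih =>
    rw [sum_Icc_succ_top (by omega), ih]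
    push_cast
    have h : (2 * ((N : ℝ) + 1)) ^ 2 - 1 = (2 * N + 1) * (2 * N + 3) := by ring
    rw [h]
    field_simp
    ring

theorem sum_inv_sq_sub_one_lt_half {s : Finset ℕ} (hpos : ∀ a ∈ s, 0 < a)
    (heven : ∀ a ∈ s, Even a) : ∑ a ∈ s, ((a : ℝ) ^ 2 - 1)⁻¹ < 1 / 2 := by
  set N := s.sup id
  have hsub : s ⊆ (Icc 1 N).image (2 * ·) := by
    intro a ha
    obtain ⟨b, rfl⟩ := heven a ha
    have := hpos _ ha
    have : b + b ≤ N := le_sup (f := id) ha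
    exact mem_image.mpr ⟨b, mem_Icc.mpr ⟨by omega, by omega⟩, by ring⟩
  calc ∑ a ∈ s, (((a : ℕ) : ℝ) ^ 2 - 1)⁻¹
      ≤ ∑ a ∈ (Icc 1 N).image (2 * ·), (((a : ℕ) : ℝ) ^ 2 - 1)⁻¹ := by
        refine sum_le_sum_of_subset_of_nonneg hsub fun a ha _ => inv_sq_sub_one_nonneg ?_
        obtain ⟨b, hb, rfl⟩ := mem_image.mp ha
        have := (mem_Icc.mp hb).1
        omega
    _ = (N : ℝ) / (2 * N + 1) := by
        rw [sum_image fun _ _ _ _ h => by simpa using h]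
        push_cast
        exact sum_Icc_inv_two_mul_sq_sub_one N
    _ < 1 / 2 := by
        rw [div_lt_div_iff₀ (by positivity) two_pos]
        linarith

end

namespace Matrix

variable {m 𝕜 : Type*} [Fintype m] [DecidableEq m] [RCLike 𝕜]

theorem spectrum_eq_range_of_charpoly_eq_prod {K ι : Type*} [Field K] [Fintype ι]
    {M : Matrix m m K} {f : ι → K} (h : M.charpoly = ∏ i, (X - C (f i))) :
    spectrum K M = Set.range f := by
  ext μ
  simp [mem_spectrum_iff_isRoot_charpoly, h, eval_prod, Finset.prod_eq_zero_iff, sub_eq_zero,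
    eq_comm (a := μ)]

theorem trace_eq_sum_of_charpoly_eq_prod {R ι : Type*} [CommRing R] [Fintype ι]
    {M : Matrix m m R} {f : ι → R} (h : M.charpoly = ∏ i, (X - C (f i))) :
    M.trace = ∑ i, f i := by
  rw [trace_eq_neg_charpoly_nextCoeff, h, prod_X_sub_C_nextCoeff, neg_neg]

open scoped ComplexOrder MatrixOrder in
/-- `P^(1/2) D P^(1/2)` is congruent to `D` and has the same characteristic polynomial as `D P`. -/
theorem PosSemidef.of_spectrum_mul_posDef {D P : Matrix m m 𝕜} (hD : D.IsHermitian)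
    (hP : P.PosDef) (h : spectrum 𝕜 (D * P) ⊆ {a | 0 ≤ a}) : D.PosSemidef := by
  set W := CFC.sqrt P
  have hWW : W * W = P := CFC.sqrt_mul_sqrt_self P hP.posSemidef.nonneg
  have hW : W.IsHermitian := (CFC.sqrt_nonneg P).posSemidef.isHermitian
  have hWunit : IsUnit W := isUnit_of_mul_isUnit_left (hWW.symm ▸ hP.isUnit)
  rw [← hWunit.posSemidef_star_left_conjugate_iff, posSemidef_iff_isHermitian_and_spectrum_nonneg]
  refine ⟨isHermitian_conjTranspose_mul_mul W hD, fun μ hμ => h ?_⟩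
  have hchar : (star W * D * W).charpoly = (D * P).charpoly := by
    rw [star_eq_conjTranspose, hW.eq, mul_assoc, charpoly_mul_comm, mul_assoc, hWW]
  rwa [mem_spectrum_iff_isRoot_charpoly, ← hchar, ← mem_spectrum_iff_isRoot_charpoly]

end Matrix

theorem Fin.sum_ite_intCast_eq {M : Type*} [AddCommMonoid M] (n : ℕ) (g : ℤ → M) (c : ℤ) :
    ∑ l : Fin n, (if ((l : ℕ) : ℤ) = c then g l else 0) = if 0 ≤ c ∧ c < n then g c else 0 := by
  split_ifs with hc
  · lift c to ℕ using hc.1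
    rw [Finset.sum_eq_single ⟨c, by exact_mod_cast hc.2⟩ (fun l _ hl => if_neg fun h => hl
      (Fin.ext (by exact_mod_cast h))) (by simp), if_pos rfl]
  · refine Finset.sum_eq_zero fun l _ => if_neg fun h => hc ?_
    have := l.2
    omega

theorem Fin.sum_boole_val_le {R : Type*} [AddCommMonoidWithOne R] {N c : ℕ} (hc : c < N) :
    ∑ m : Fin N, (if (m : ℕ) ≤ c then (1 : R) else 0) = c + 1 := by
  rw [Fin.sum_univ_eq_sum_range (fun m => if m ≤ c then (1 : R) else 0), Finset.sum_boole,
    show (Finset.range N).filter (· ≤ c) = Finset.range (c + 1) by ext; simp; omega]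
  simp

theorem marxB_mulVec_apply {n : ℕ} (g : ℤ → ℝ) (h₀ : g (-1) = 0)
    (hn : g n = ((n : ℝ) - 1) / n * g (n - 1)) (i : Fin n) :
    (marxB n *ᵥ fun l => g l) i = 2 * g i - g (i - 1) - g (i + 1) := by
  have hentry : ∀ l : Fin n, marxB n i l * g l =
      (if l = i then (if (i : ℕ) = n - 1 then ((n : ℝ) + 1) / n else 2) * g l else 0)
      - (if ((l : ℕ) : ℤ) = i - 1 then g l else 0) - (if ((l : ℕ) : ℤ) = i + 1 then g l else 0) := by
    intro l
    simp only [marxB, of_apply, Fin.ext_iff]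
    split_ifs <;> first | ring1 | omega
  simp only [mulVec, dotProduct, hentry, Finset.sum_sub_distrib, Finset.sum_ite_eq',
    Finset.mem_univ, if_true, Fin.sum_ite_intCast_eq]
  have hprev : (if 0 ≤ ((i : ℕ) : ℤ) - 1 ∧ ((i : ℕ) : ℤ) - 1 < n then g (i - 1) else 0)
      = g (i - 1) := by
    split_ifs with h
    · rfl
    · rw [show ((i : ℕ) : ℤ) = 0 by omega, zero_sub, h₀]
  rw [hprev]
  by_cases hlast : (i : ℕ) = n - 1
  · have hi : ((i : ℕ) : ℤ) + 1 = n := by omega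
    have hn0 : (n : ℝ) ≠ 0 := by exact_mod_cast i.pos.ne'
    rw [if_pos hlast, if_neg (by omega), hi, hn, ← hi, add_sub_cancel_right]
    field_simp
    ring
  · rw [if_neg hlast, if_pos (by omega)]

/-- The entries of `(marxB n)⁻¹`, extended to all integer indices so that each column solves
`2 g a - g (a - 1) - g (a + 1) = δ a b` with the boundary conditions of `marxB_mulVec_apply`. -/
def marxGreen (n : ℕ) (a b : ℤ) : ℝ :=
  ((min a b + 1 : ℤ) : ℝ) * ((2 * n - max a b - 1 : ℤ) : ℝ) / (2 * n)

theorem marxGreen_second_diff {n : ℕ} (hn : n ≠ 0) (a b : ℤ) :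
    2 * marxGreen n a b - marxGreen n (a - 1) b - marxGreen n (a + 1) b =
      if a = b then 1 else 0 := by
  have hn' : (n : ℝ) ≠ 0 := by exact_mod_cast hn
  unfold marxGreen
  rcases lt_trichotomy a b with h | rfl | h
  · rw [min_eq_left h.le, min_eq_left (by omega : a - 1 ≤ b), min_eq_left (by omega : a + 1 ≤ b),
      max_eq_right h.le, max_eq_right (by omega : a - 1 ≤ b), max_eq_right (by omega : a + 1 ≤ b),
      if_neg h.ne]
    push_cast
    ring
  · rw [min_self, max_self, min_eq_left (by omega : a - 1 ≤ a), max_eq_right (by omega : a - 1 ≤ a),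
      min_eq_right (by omega : a ≤ a + 1), max_eq_left (by omega : a ≤ a + 1), if_pos rfl]
    push_cast
    field_simp
    ring
  · rw [min_eq_right h.le, min_eq_right (by omega : b ≤ a - 1), min_eq_right (by omega : b ≤ a + 1),
      max_eq_left h.le, max_eq_left (by omega : b ≤ a - 1), max_eq_left (by omega : b ≤ a + 1),
      if_neg h.ne']
    push_cast
    ring

theorem marxGreen_neg_one (n : ℕ) {b : ℤ} (hb : 0 ≤ b) : marxGreen n (-1) b = 0 := by
  simp [marxGreen, min_eq_left (by omega : (-1 : ℤ) ≤ b)]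

theorem marxGreen_right_boundary {n : ℕ} {b : ℤ} (hb : b < n) :
    marxGreen n n b = ((n : ℝ) - 1) / n * marxGreen n (n - 1) b := by
  unfold marxGreen
  rw [min_eq_right hb.le, max_eq_left hb.le, min_eq_right (by omega : b ≤ n - 1),
    max_eq_left (by omega : b ≤ n - 1)]
  rcases eq_or_ne (n : ℝ) 0 with hn | hn
  · simp [hn]
  · push_cast
    field_simp
    ring

def marxBInv (n : ℕ) : Matrix (Fin n) (Fin n) ℝ := of fun i j => marxGreen n (i : ℕ) (j : ℕ)

theorem marxB_mul_marxBInv (n : ℕ) : marxB n * marxBInv n = 1 := by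
  ext i j
  change (marxB n *ᵥ fun l : Fin n => marxGreen n (l : ℕ) (j : ℕ)) i = _
  rw [marxB_mulVec_apply (fun a => marxGreen n a j) (marxGreen_neg_one n (by positivity))
    (marxGreen_right_boundary (by exact_mod_cast j.2)), marxGreen_second_diff i.pos.ne', one_apply]
  simp [Fin.ext_iff]

theorem marxB_inv (n : ℕ) : (marxB n)⁻¹ = marxBInv n :=
  inv_eq_right_inv (marxB_mul_marxBInv n)

/-- Its columns are the indicators of `{0, …, j}` in `ℝ^(2n)` projected orthogonally to the
all-ones vector, with Gram matrix `min i j + 1 - (i + 1) (j + 1) / (2n) = marxGreen n i j`. -/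
def marxGramFactor (n : ℕ) : Matrix (Fin (2 * n)) (Fin n) ℝ :=
  of fun m j => (if (m : ℕ) ≤ j then 1 else 0) - ((j : ℕ) + 1 : ℝ) / (2 * n)

theorem marxGramFactor_gram (n : ℕ) : (marxGramFactor n)ᴴ * marxGramFactor n = marxBInv n := by
  ext i j
  have hn : (n : ℝ) ≠ 0 := by exact_mod_cast i.pos.ne'
  have hentry : ∀ m : Fin (2 * n), (marxGramFactor n)ᴴ i m * marxGramFactor n m j =
      (if (m : ℕ) ≤ min (i : ℕ) j then 1 else 0)
        - ((j : ℕ) + 1) / (2 * n) * (if (m : ℕ) ≤ i then 1 else 0)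
        - ((i : ℕ) + 1) / (2 * n) * (if (m : ℕ) ≤ j then 1 else 0)
        + ((i : ℕ) + 1) / (2 * n) * (((j : ℕ) + 1) / (2 * n)) := by
    intro m
    simp only [marxGramFactor, conjTranspose_apply, of_apply, star_trivial, le_min_iff]
    split_ifs <;> first | ring1 | omega
  simp only [mul_apply, hentry, Finset.sum_add_distrib, Finset.sum_sub_distrib, ← Finset.mul_sum,
    Finset.sum_const, Finset.card_univ, Fintype.card_fin, nsmul_eq_mul]
  rw [Fin.sum_boole_val_le (by omega), Fin.sum_boole_val_le (by omega),
    Fin.sum_boole_val_le (by omega)]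
  simp only [marxBInv, of_apply, marxGreen]
  rcases le_total (i : ℕ) (j : ℕ) with h | h
  · rw [min_eq_left h, min_eq_left (by exact_mod_cast h), max_eq_right (by exact_mod_cast h)]
    push_cast
    field_simp
    ring
  · rw [min_eq_right h, min_eq_right (by exact_mod_cast h), max_eq_left (by exact_mod_cast h)]
    push_cast
    field_simp
    ring

theorem marxBInv_posDef (n : ℕ) : (marxBInv n).PosDef := by
  rw [← marxGramFactor_gram, (posSemidef_conjTranspose_mul_self _).posDef_iff_isUnit,
    marxGramFactor_gram]
  exact IsUnit.of_mul_eq_one_right _ (marxB_mul_marxBInv n)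

theorem one_half_le_marxBInv_self {n : ℕ} (j : Fin n) : 1 / 2 ≤ marxBInv n j j := by
  have hn : (0 : ℝ) < n := by exact_mod_cast j.pos
  have hj : (j : ℝ) + 1 ≤ n := by exact_mod_cast j.2
  rw [marxBInv, of_apply, marxGreen, min_self, max_self, le_div_iff₀ (by positivity)]
  push_cast
  nlinarith [(j.1.cast_nonneg : (0 : ℝ) ≤ j)]

theorem statement3_general (n : ℕ) (α : Fin n → ℕ)
    (hdist : Function.Injective α) (hpos : ∀ i, 0 < α i) (heven : ∀ i, Even (α i))
    (k : Fin n → ℝ)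
    (hspec : (Matrix.diagonal k * (marxB n)⁻¹).charpoly
      = ∏ i, (Polynomial.X - Polynomial.C (((α i : ℝ) ^ 2 - 1)⁻¹))) :
    ∑ i, k i < 1 := by
  rw [marxB_inv] at hspec
  have hk : ∀ j, 0 ≤ k j := by
    have hK : (diagonal k).PosSemidef := by
      refine PosSemidef.of_spectrum_mul_posDef (isHermitian_diagonal k) (marxBInv_posDef n) ?_
      rw [spectrum_eq_range_of_charpoly_eq_prod hspec]
      rintro _ ⟨i, rfl⟩
      exact inv_sq_sub_one_nonneg (hpos i)
    exact fun j => by simpa using hK.diag_nonneg (i := j)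
  have htrace : ∑ j, k j * marxBInv n j j = ∑ i, ((α i : ℝ) ^ 2 - 1)⁻¹ := by
    rw [← trace_eq_sum_of_charpoly_eq_prod hspec]
    simp [trace, diagonal_mul]
  have hsum : ∑ i, ((α i : ℝ) ^ 2 - 1)⁻¹ < 1 / 2 := by
    have := sum_inv_sq_sub_one_lt_half (s := Finset.univ.image α) (by simpa using hpos)
      (by simpa using heven)
    rwa [Finset.sum_image fun i _ j _ h => hdist h] at this
  calc ∑ i, k i ≤ ∑ j, 2 * (k j * marxBInv n j j) :=
        Finset.sum_le_sum fun j _ => by nlinarith [hk j, one_half_le_marxBInv_self j]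
    _ = 2 * ∑ i, ((α i : ℝ) ^ 2 - 1)⁻¹ := by rw [← Finset.mul_sum, htrace]
    _ < 1 := by linarith

/-- any solution `k` of the inverse eigenvalue problem
`σ(K B⁻¹) = {(αᵢ² - 1)⁻¹}`, with the `αᵢ` distinct positive even integers,
satisfies `k₁ + ⋯ + kₙ < 1`. -/
theorem statement3 (n : ℕ) (hn : 1 ≤ n) (α : Fin n → ℕ)
    (hdist : Function.Injective α) (hpos : ∀ i, 0 < α i) (heven : ∀ i, Even (α i))
    (k : Fin n → ℝ)
    (hspec : (Matrix.diagonal k * (marxB n)⁻¹).charpoly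
      = ∏ i, (Polynomial.X - Polynomial.C (((α i : ℝ) ^ 2 - 1)⁻¹))) :
    ∑ i, k i < 1 :=
  statement3_general n α hdist hpos heven k hspec

end
end

section
/- Let n ≥ 1 and let F = diag(f₁, …, fₙ) be a real diagonal matrix with fᵢ > 0 for all i. Then every complex eigenvalue of the matrix Iₙ + B·F is a positive real number; moreover Iₙ + B·F is similar over ℝ to the symmetric positive definite matrix Iₙ + √F·B·√F, where √F = diag(√f₁, …, √fₙ). -/
/-! Summation by parts gives `xᵀ B x = x₀² + ∑ (xᵢ₊₁ - xᵢ)² + xₙ₋₁² / n`, i.e.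
`B = Kᵀ K + diag(0, …, 0, 1/n)` with `K` the lower bidiagonal difference matrix, so `B` is
positive semidefinite. Since `F = √F √F`, conjugating `I + B F` by `√F` gives
`I + √F B √F`, the identity plus a positive semidefinite matrix, hence positive definite.
Similar matrices share their characteristic polynomial, and that of a positive definite
real symmetric matrix splits with positive real roots. -/

open Matrix Polynomial

noncomputable section

def diffMatrix (n : ℕ) : Matrix (Fin n) (Fin n) ℝ :=
  Matrix.of fun i j => (if (i : ℕ) = j then 1 else 0) - (if (i : ℕ) = j + 1 then 1 else 0)

lemma diffMatrix_transpose_mul_self_apply (n : ℕ) (i j : Fin n) :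
    ((diffMatrix n)ᵀ * diffMatrix n) i j =
      if i = j then (if (i : ℕ) = n - 1 then 1 else 2)
      else if (i : ℕ) + 1 = j ∨ (j : ℕ) + 1 = i then -1 else 0 := by
  simp only [mul_apply, transpose_apply, diffMatrix, of_apply]
  rw [Fin.sum_univ_eq_sum_range (fun k : ℕ => ((if k = i then (1 : ℝ) else 0) -
    (if k = i + 1 then 1 else 0)) * ((if k = j then 1 else 0) - (if k = j + 1 then 1 else 0)))]
  simp only [sub_mul, mul_sub, ite_mul, one_mul, zero_mul, Finset.sum_sub_distrib,
    Finset.sum_ite_eq', Finset.mem_range]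
  split_ifs <;> simp only [Fin.ext_iff] at * <;> first | omega | norm_num

lemma marxB_eq_diffMatrix (n : ℕ) :
    marxB n = (diffMatrix n)ᵀ * diffMatrix n +
      diagonal fun i : Fin n => if (i : ℕ) = n - 1 then 1 / (n : ℝ) else 0 := by
  ext i j
  have hn : (n : ℝ) ≠ 0 := Nat.cast_ne_zero.2 i.pos.ne'
  rw [Matrix.add_apply, diffMatrix_transpose_mul_self_apply, diagonal_apply, marxB, of_apply]
  split_ifs <;> simp_all [add_div]

lemma marxB_posSemidef (n : ℕ) : (marxB n).PosSemidef := by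
  rw [marxB_eq_diffMatrix]
  refine (posSemidef_conjTranspose_mul_self _).add (PosSemidef.diagonal fun i => ?_)
  split_ifs <;> positivity

namespace Matrix

lemma mul_one_add_mul_mul_self_mul_inv {n R : Type*} [Fintype n] [DecidableEq n] [CommRing R]
    (A : Matrix n n R) {D : Matrix n n R} (hD : IsUnit D.det) :
    D * (1 + A * (D * D)) * D⁻¹ = 1 + D * A * D := by
  simp only [mul_add, add_mul, mul_one, Matrix.mul_assoc, mul_nonsing_inv _ hD]

lemma charpoly_eq_of_conj {n R : Type*} [Fintype n] [DecidableEq n] [CommRing R]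
    {P M N : Matrix n n R} (hP : IsUnit P.det) (h : P * M * P⁻¹ = N) :
    M.charpoly = N.charpoly := by
  lift P to (Matrix n n R)ˣ using (isUnit_iff_isUnit_det P).2 hP
  rw [← h, charpoly_units_conj]

lemma PosDef.exists_pos_eq_of_isRoot_charpoly_map {n : Type*} [Fintype n] [DecidableEq n]
    {A : Matrix n n ℝ} (hA : A.PosDef) {μ : ℂ}
    (hμ : (A.charpoly.map (algebraMap ℝ ℂ)).IsRoot μ) : ∃ r : ℝ, 0 < r ∧ μ = r := by
  rw [hA.isHermitian.charpoly_eq, Polynomial.map_prod, IsRoot, eval_prod,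
    Finset.prod_eq_zero_iff] at hμ
  obtain ⟨i, -, hi⟩ := hμ
  refine ⟨_, hA.eigenvalues_pos i, ?_⟩
  simpa [sub_eq_zero] using hi

end Matrix

theorem statement4_general (n : ℕ) (f : Fin n → ℝ) (hf : ∀ i, 0 < f i) :
    (∀ μ : ℂ,
      (((1 + marxB n * Matrix.diagonal f).charpoly.map (algebraMap ℝ ℂ)).IsRoot μ →
        ∃ r : ℝ, 0 < r ∧ μ = (r : ℂ))) ∧
    (∃ P : Matrix (Fin n) (Fin n) ℝ, IsUnit P.det ∧
      P * (1 + marxB n * Matrix.diagonal f) * P⁻¹ =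
        1 + Matrix.diagonal (fun i => Real.sqrt (f i)) * marxB n *
          Matrix.diagonal (fun i => Real.sqrt (f i))) ∧
    (1 + Matrix.diagonal (fun i => Real.sqrt (f i)) * marxB n *
        Matrix.diagonal (fun i => Real.sqrt (f i))).IsSymm ∧
    (1 + Matrix.diagonal (fun i => Real.sqrt (f i)) * marxB n *
        Matrix.diagonal (fun i => Real.sqrt (f i))).PosDef := by
  set D : Matrix (Fin n) (Fin n) ℝ := diagonal fun i => √(f i)
  have hD : IsUnit D.det := by
    simp [D, det_diagonal, Finset.prod_ne_zero_iff, fun i => (Real.sqrt_pos.2 (hf i)).ne']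
  have hf_eq : diagonal f = D * D := by
    simp only [D, diagonal_mul_diagonal, Real.mul_self_sqrt (hf _).le]
  have hsim : D * (1 + marxB n * diagonal f) * D⁻¹ = 1 + D * marxB n * D := by
    rw [hf_eq, mul_one_add_mul_mul_self_mul_inv _ hD]
  have hpos : (1 + D * marxB n * D).PosDef := by
    refine PosDef.one.add_posSemidef ?_
    simpa [D] using (marxB_posSemidef n).conjTranspose_mul_mul_same D
  refine ⟨fun μ hμ => hpos.exists_pos_eq_of_isRoot_charpoly_map ?_, ⟨D, hD, hsim⟩,
    isHermitian_iff_isSymm.1 hpos.isHermitian, hpos⟩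
  rwa [← charpoly_eq_of_conj hD hsim]

/-- for a positive diagonal `F = diag f`, every complex eigenvalue
of `I + B·F` is a positive real, and `I + B·F` is similar over ℝ to the
symmetric positive definite matrix `I + √F·B·√F`. -/
theorem statement4 (n : ℕ) (hn : 1 ≤ n) (f : Fin n → ℝ) (hf : ∀ i, 0 < f i) :
    (∀ μ : ℂ,
      (((1 + marxB n * Matrix.diagonal f).charpoly.map (algebraMap ℝ ℂ)).IsRoot μ →
        ∃ r : ℝ, 0 < r ∧ μ = (r : ℂ))) ∧
    (∃ P : Matrix (Fin n) (Fin n) ℝ, IsUnit P.det ∧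
      P * (1 + marxB n * Matrix.diagonal f) * P⁻¹ =
        1 + Matrix.diagonal (fun i => Real.sqrt (f i)) * marxB n *
          Matrix.diagonal (fun i => Real.sqrt (f i))) ∧
    (1 + Matrix.diagonal (fun i => Real.sqrt (f i)) * marxB n *
        Matrix.diagonal (fun i => Real.sqrt (f i))).IsSymm ∧
    (1 + Matrix.diagonal (fun i => Real.sqrt (f i)) * marxB n *
        Matrix.diagonal (fun i => Real.sqrt (f i))).PosDef :=
  statement4_general n f hf

end
end

section
/- Let n ≥ 1, let ℓ > 0, c > 0, and let F = diag(f₁, …, fₙ) be a real diagonal matrix with fᵢ > 0 for all i. Let a₁², …, aₙ² denote the eigenvalues, listed with multiplicity, of the symmetric positive definite matrix Iₙ + √F·B·√F (these are positive reals), and set a₀ = 1. Then the characteristic polynomial of A₀ satisfies det(s·I_{3n+2} − A₀) = sⁿ · ∏_{k=0}^{n} (s² + ω₀²·a_k²). -/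
open Matrix Polynomial

noncomputable section

/-- The `n × (n+1)` difference matrix `Σ`. -/
def marxSigma (n : ℕ) : Matrix (Fin n) (Fin (n + 1)) ℝ :=
  Matrix.of fun i j =>
    if (j : ℕ) = (i : ℕ) then 1 else if (j : ℕ) = (i : ℕ) + 1 then -1 else 0

/-- `J_{n+1} = diag(1, …, 1, n)`. -/
def marxJ (n : ℕ) : Matrix (Fin (n + 1)) (Fin (n + 1)) ℝ :=
  Matrix.diagonal fun j => if (j : ℕ) = n then (n : ℝ) else 1

/-- `J_{-1} = diag(1, …, 1, -1)` of size `n+1`. -/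
def marxJm (n : ℕ) : Matrix (Fin (n + 1)) (Fin (n + 1)) ℝ :=
  Matrix.diagonal fun j => if (j : ℕ) = n then (-1 : ℝ) else 1

/-- The `(3n+2) × (3n+2)` state transition matrix `A₀` of the Marx circuit,
indexed by `(Fin n ⊕ Fin (n+1)) ⊕ Fin (n+1)`, the `2n+1` voltages followed by
the `n+1` currents. -/
def marxA0 (n : ℕ) (ℓ c : ℝ) (f : Fin n → ℝ) :
    Matrix ((Fin n ⊕ Fin (n + 1)) ⊕ Fin (n + 1))
      ((Fin n ⊕ Fin (n + 1)) ⊕ Fin (n + 1)) ℝ :=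
  Matrix.fromBlocks 0
    (Matrix.fromRows (-(1 / c) • (Matrix.diagonal f * marxSigma n * marxJm n))
      ((1 / c) • (1 : Matrix (Fin (n + 1)) (Fin (n + 1)) ℝ)))
    (Matrix.fromCols ((1 / ℓ) • ((marxJ n)⁻¹ * marxJm n * (marxSigma n)ᵀ))
      (-(1 / ℓ) • (1 : Matrix (Fin (n + 1)) (Fin (n + 1)) ℝ)))
    0

/-! `A₀` is block anti-diagonal, so a Schur complement gives
`s^(n+1) · det(s − A₀) = s^(2n+1) · det(s² − L R)`. The product `L R` equals `−ω₀² (1 + U V)`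
with `V = √F Σ J₋₁` and `U = J⁻¹ Vᵀ`, and the Weinstein–Aronszajn identity trades the
`(n+1)`-dimensional determinant in `U V` for the `n`-dimensional one in
`V U = √F Σ J⁻¹ Σᵀ √F = √F B √F`; the dimension drop leaves the extra factor `s² + ω₀²`,
i.e. the eigenvalue `a₀ = 1`. -/

namespace Matrix

variable {m k 𝕜 : Type*} [Fintype m] [Fintype k] [DecidableEq m] [DecidableEq k] [Field 𝕜]

theorem eval_charpoly_eq_det_smul_one_sub (M : Matrix m m 𝕜) (s : 𝕜) :
    M.charpoly.eval s = (s • 1 - M).det := by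
  rw [eval_charpoly, scalar_apply, smul_one_eq_diagonal]

theorem det_smul_one_sub_fromBlocks_zero (R : Matrix m k 𝕜) (L : Matrix k m 𝕜) {s : 𝕜}
    (hs : s ≠ 0) :
    s ^ Fintype.card k * (s • 1 - fromBlocks 0 R L 0).det =
      s ^ Fintype.card m * (s ^ 2 • 1 - L * R).det := by
  let _ : Invertible (s • 1 : Matrix m m 𝕜) := ⟨s⁻¹ • 1, by simp [hs], by simp [hs]⟩
  have hinv : ⅟(s • 1 : Matrix m m 𝕜) = s⁻¹ • 1 := rfl
  have hblocks : s • 1 - fromBlocks 0 R L 0 = fromBlocks (s • 1) (-R) (-L) (s • 1) := by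
    rw [← fromBlocks_one, fromBlocks_smul, sub_eq_add_neg, fromBlocks_neg, fromBlocks_add]
    simp
  rw [hblocks, det_fromBlocks₁₁, hinv, det_smul, det_one, mul_one, mul_left_comm,
    ← det_smul]
  congr 2
  simp only [Matrix.neg_mul, Matrix.mul_neg, neg_neg, Matrix.mul_smul, Matrix.smul_mul,
    Matrix.mul_one, smul_sub, smul_neg, smul_smul, mul_inv_cancel₀ hs, one_smul, sq]

theorem pow_mul_det_smul_one_add_smul_mul_comm (U : Matrix m k 𝕜) (V : Matrix k m 𝕜) {α : 𝕜}
    (hα : α ≠ 0) (β : 𝕜) :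
    α ^ Fintype.card k * (α • 1 + β • (U * V)).det =
      α ^ Fintype.card m * (α • 1 + β • (V * U)).det := by
  have hUV : α • 1 + β • (U * V) = α • (1 + (α⁻¹ * β) • U * V) := by
    rw [smul_add, smul_mul, smul_smul, ← mul_assoc, mul_inv_cancel₀ hα, one_mul]
  have hVU : α • 1 + β • (V * U) = α • (1 + V * (α⁻¹ * β) • U) := by
    rw [smul_add, Matrix.mul_smul, smul_smul, ← mul_assoc, mul_inv_cancel₀ hα, one_mul]
  rw [hUV, hVU, det_smul, det_smul, det_one_add_mul_comm]
  ring

theorem det_smul_one_add_smul_of_charpoly_eq_prod {M : Matrix m m 𝕜} {b : m → 𝕜}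
    (hM : M.charpoly = ∏ i, (X - C (b i))) (y : 𝕜) {t : 𝕜} (ht : t ≠ 0) :
    (y • 1 + t • M).det = ∏ i, (y + t * b i) := by
  have hshift : y • 1 + t • M = (-t) • ((-y / t) • 1 - M) := by
    rw [smul_sub, smul_smul]; field_simp; module
  rw [hshift, det_smul, ← eval_charpoly_eq_det_smul_one_sub, hM, eval_prod, Fintype.card,
    ← Finset.prod_const, ← Finset.prod_mul_distrib]
  refine Finset.prod_congr rfl fun i _ => ?_
  simp only [eval_sub, eval_X, eval_C]
  field_simp
  ring

end Matrix

section Marx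

variable (n : ℕ)

def marxR (c : ℝ) (f : Fin n → ℝ) : Matrix (Fin n ⊕ Fin (n + 1)) (Fin (n + 1)) ℝ :=
  fromRows (-(1 / c) • (diagonal f * marxSigma n * marxJm n)) ((1 / c) • 1)

def marxL (ℓ : ℝ) : Matrix (Fin (n + 1)) (Fin n ⊕ Fin (n + 1)) ℝ :=
  fromCols ((1 / ℓ) • ((marxJ n)⁻¹ * marxJm n * (marxSigma n)ᵀ)) (-(1 / ℓ) • 1)

theorem marxA0_eq_fromBlocks (ℓ c : ℝ) (f : Fin n → ℝ) :
    marxA0 n ℓ c f = fromBlocks 0 (marxR n c f) (marxL n ℓ) 0 :=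
  rfl

def marxV (f : Fin n → ℝ) : Matrix (Fin n) (Fin (n + 1)) ℝ :=
  diagonal (fun i => Real.sqrt (f i)) * marxSigma n * marxJm n

theorem marxJ_inv :
    (marxJ n)⁻¹ = diagonal fun j : Fin (n + 1) => if (j : ℕ) = n then (n : ℝ)⁻¹ else 1 := by
  rcases n.eq_zero_or_pos with rfl | hn
  -- for `n = 0`, `J = diag 0` is singular and both sides are the junk value `0`
  · ext i j
    simp [marxJ, Fin.fin_one_eq_zero]
  · apply inv_eq_right_inv
    rw [marxJ, diagonal_mul_diagonal, ← diagonal_one]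
    congr 1
    funext j
    split_ifs
    · exact mul_inv_cancel₀ (by positivity)
    · exact one_mul 1

theorem marxJm_transpose : (marxJm n)ᵀ = marxJm n :=
  diagonal_transpose _

theorem marxJm_mul_marxJ_inv_mul_marxJm : marxJm n * (marxJ n)⁻¹ * marxJm n = (marxJ n)⁻¹ := by
  rw [marxJ_inv, marxJm, diagonal_mul_diagonal, diagonal_mul_diagonal]
  congr 1
  funext j
  split_ifs <;> ring

theorem marxSigma_mul_marxJ_inv_mul_transpose :
    marxSigma n * (marxJ n)⁻¹ * (marxSigma n)ᵀ = marxB n := by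
  ext i j
  have hn : (n : ℝ) ≠ 0 := by have := i.pos; positivity
  rw [marxJ_inv, mul_apply, Fintype.sum_eq_add i.castSucc i.succ (Fin.castSucc_lt_succ).ne]
  · simp only [mul_diagonal, transpose_apply, marxSigma, marxB, of_apply, Fin.val_castSucc,
      Fin.val_succ, Fin.ext_iff, add_div, div_self hn]
    split_ifs <;> first | omega | norm_num
  · rintro k ⟨hk₁, hk₂⟩
    simp_all [marxSigma, Fin.ext_iff]

variable {n}

theorem marxL_mul_marxR (ℓ c : ℝ) {f : Fin n → ℝ} (hf : ∀ i, 0 ≤ f i) :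
    marxL n ℓ * marxR n c f = -(ℓ * c)⁻¹ • (1 + (marxJ n)⁻¹ * (marxV n f)ᵀ * marxV n f) := by
  have hF : diagonal f =
      diagonal (fun i => Real.sqrt (f i)) * diagonal fun i => Real.sqrt (f i) := by
    rw [diagonal_mul_diagonal]
    exact congrArg diagonal (funext fun i => (Real.mul_self_sqrt (hf i)).symm)
  rw [marxL, marxR, fromCols_mul_fromRows, marxV, transpose_mul, transpose_mul, marxJm_transpose,
    diagonal_transpose, hF]
  simp only [Matrix.mul_assoc, Matrix.smul_mul, Matrix.mul_smul, Matrix.mul_one]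
  module

theorem marxV_mul_marxJ_inv_mul_transpose (f : Fin n → ℝ) :
    marxV n f * ((marxJ n)⁻¹ * (marxV n f)ᵀ) =
      diagonal (fun i => Real.sqrt (f i)) * marxB n * diagonal fun i => Real.sqrt (f i) := by
  conv_rhs => rw [← marxSigma_mul_marxJ_inv_mul_transpose, ← marxJm_mul_marxJ_inv_mul_marxJm]
  rw [marxV, transpose_mul, transpose_mul, marxJm_transpose, diagonal_transpose]
  simp only [Matrix.mul_assoc]

end Marx

theorem statement6_general (n : ℕ) (ℓ c : ℝ) (hℓ : 0 < ℓ) (hc : 0 < c)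
    (f : Fin n → ℝ) (hf : ∀ i, 0 < f i)
    (ω₀ : ℝ) (hω₀ : ω₀ = 1 / Real.sqrt (ℓ * c))
    (a : Fin n → ℝ)
    (heig : (1 + Matrix.diagonal (fun i => Real.sqrt (f i)) * marxB n *
        Matrix.diagonal (fun i => Real.sqrt (f i))).charpoly =
      ∏ i, (Polynomial.X - Polynomial.C ((a i) ^ 2))) :
    (marxA0 n ℓ c f).charpoly =
      Polynomial.X ^ n * (Polynomial.X ^ 2 + Polynomial.C (ω₀ ^ 2)) *
        ∏ i, (Polynomial.X ^ 2 + Polynomial.C (ω₀ ^ 2 * (a i) ^ 2)) := by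
  have hω : (ℓ * c)⁻¹ = ω₀ ^ 2 := by
    rw [hω₀, div_pow, one_pow, Real.sq_sqrt (by positivity), one_div]
  have hω_pos : 0 < ω₀ ^ 2 := hω ▸ by positivity
  refine eq_of_infinite_eval_eq _ _ ((Set.finite_singleton 0).infinite_compl.mono fun s hs => ?_)
  have hs : s ≠ 0 := hs
  have hu : s ^ 2 + ω₀ ^ 2 ≠ 0 := by positivity
  set V := marxV n f
  set U := (marxJ n)⁻¹ * Vᵀ
  have hLR : s ^ 2 • 1 - marxL n ℓ * marxR n c f = (s ^ 2 + ω₀ ^ 2) • 1 + ω₀ ^ 2 • (U * V) := by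
    rw [marxL_mul_marxR ℓ c fun i => (hf i).le, hω]
    module
  have hVU : (s ^ 2 + ω₀ ^ 2) • 1 + ω₀ ^ 2 • (V * U) =
      s ^ 2 • 1 + ω₀ ^ 2 • (1 + diagonal (fun i => Real.sqrt (f i)) * marxB n *
        diagonal fun i => Real.sqrt (f i)) := by
    rw [marxV_mul_marxJ_inv_mul_transpose]
    module
  have hdet : (s ^ 2 • 1 - marxL n ℓ * marxR n c f).det =
      (s ^ 2 + ω₀ ^ 2) * ∏ i, (s ^ 2 + ω₀ ^ 2 * a i ^ 2) := by
    have hWA := pow_mul_det_smul_one_add_smul_mul_comm U V hu (ω₀ ^ 2)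
    rw [Fintype.card_fin, Fintype.card_fin, hVU,
      det_smul_one_add_smul_of_charpoly_eq_prod heig _ hω_pos.ne'] at hWA
    refine mul_left_cancel₀ (pow_ne_zero n hu) ?_
    rw [hLR, hWA]
    ring
  have hblock := det_smul_one_sub_fromBlocks_zero (marxR n c f) (marxL n ℓ) hs
  rw [← marxA0_eq_fromBlocks, ← eval_charpoly_eq_det_smul_one_sub, hdet] at hblock
  refine mul_left_cancel₀ (pow_ne_zero (n + 1) hs) ?_
  simp only [Fintype.card_sum, Fintype.card_fin] at hblock
  simp only [hblock, eval_mul, eval_pow, eval_X, eval_add, eval_C, eval_prod]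
  ring

/-- Lemma 3 of the paper: if `a₁², …, aₙ²` are the eigenvalues
(with multiplicity) of the symmetric positive definite matrix `I + √F·B·√F`,
and `a₀ = 1`, then the characteristic polynomial of `A₀` is
`sⁿ · ∏_{k=0}^{n} (s² + ω₀²·aₖ²)`, where `ω₀ = 1/√(ℓc)`. -/
theorem statement6 (n : ℕ) (hn : 1 ≤ n) (ℓ c : ℝ) (hℓ : 0 < ℓ) (hc : 0 < c)
    (f : Fin n → ℝ) (hf : ∀ i, 0 < f i)
    (ω₀ : ℝ) (hω₀ : ω₀ = 1 / Real.sqrt (ℓ * c))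
    (a : Fin n → ℝ) (ha : ∀ i, 0 < a i)
    (heig : (1 + Matrix.diagonal (fun i => Real.sqrt (f i)) * marxB n *
        Matrix.diagonal (fun i => Real.sqrt (f i))).charpoly =
      ∏ i, (Polynomial.X - Polynomial.C ((a i) ^ 2))) :
    (marxA0 n ℓ c f).charpoly =
      Polynomial.X ^ n * (Polynomial.X ^ 2 + Polynomial.C (ω₀ ^ 2)) *
        ∏ i, (Polynomial.X ^ 2 + Polynomial.C (ω₀ ^ 2 * (a i) ^ 2)) :=
  statement6_general n ℓ c hℓ hc f hf ω₀ hω₀ a heig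

end
end

section
/- Let n ≥ 1, let ℓ > 0, c > 0, and let F = diag(f₁, …, fₙ) be a real diagonal matrix with fᵢ > 0 for all i. Then the kernel of A₀ (as a linear map on ℝ^{3n+2}) has dimension exactly n; that is, the eigenvalue 0 of A₀ has geometric multiplicity n. -/
/-!
Write a vector of `ℝ^{3n+2}` as `(v, w, d)` with `v ∈ ℝ^n` and `w, d ∈ ℝ^{n+1}`. Since `A₀` is
block anti-diagonal, `A₀ (v, w, d) = 0` splits into `R d = 0` and `L (v, w) = 0`. The bottom block
`c⁻¹ I` of `R` forces `d = 0`, and `L (v, w) = ℓ⁻¹ (M v - w)` with `M = J_{n+1}⁻¹ J_{-1} Σᵀ`, so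
`w = M v`. Hence the kernel is the graph `{(v, M v, 0)}`, a copy of `ℝ^n`.
-/

open Matrix Polynomial

noncomputable section

namespace Matrix

variable {K : Type*} [Field K] {l m n o p : Type*}

theorem fromBlocks_zero_zero_mulVec_sumElim [Fintype l] [Fintype m]
    (B : Matrix n m K) (C : Matrix o l K) (u : l → K) (w : m → K) :
    fromBlocks 0 B C 0 *ᵥ Sum.elim u w = Sum.elim (B *ᵥ w) (C *ᵥ u) := by
  simp [fromBlocks_mulVec]

theorem injective_mulVecLin_fromRows_fromRows_one [Fintype n] [DecidableEq n] [Fintype p]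
    (M : Matrix p n K) :
    Function.Injective (fromRows (fromRows 1 M) 0 : Matrix ((n ⊕ p) ⊕ p) n K).mulVecLin := by
  intro v w h
  funext i
  simpa [fromRows_mulVec] using congrFun h (Sum.inl (Sum.inl i))

variable [Fintype p] [DecidableEq p] {a : K}

theorem fromRows_smul_one_mulVec_eq_zero_iff (ha : a ≠ 0) (X : Matrix n p K) (w : p → K) :
    fromRows X (a • 1 : Matrix p p K) *ᵥ w = 0 ↔ w = 0 := by
  constructor
  · intro h
    have hw : a • w = 0 := by
      simpa [fromRows_mulVec, smul_mulVec] using congrArg (· ∘ Sum.inr) h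
    exact (smul_eq_zero.mp hw).resolve_left ha
  · rintro rfl
    exact mulVec_zero _

theorem fromCols_smul_neg_smul_one_mulVec_sumElim_eq_zero_iff [Fintype n] (ha : a ≠ 0)
    (M : Matrix p n K) (v : n → K) (w : p → K) :
    fromCols (a • M) (-a • 1 : Matrix p p K) *ᵥ Sum.elim v w = 0 ↔ w = M *ᵥ v := by
  have h : fromCols (a • M) (-a • 1 : Matrix p p K) *ᵥ Sum.elim v w = a • (M *ᵥ v - w) := by
    rw [fromCols_mulVec_sumElim, smul_mulVec, neg_smul, neg_mulVec, smul_mulVec, one_mulVec,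
      smul_sub, sub_eq_add_neg]
  rw [h, smul_eq_zero, or_iff_right ha, sub_eq_zero, eq_comm]

variable [Fintype n] [DecidableEq n] {b : K}

theorem ker_mulVecLin_fromBlocks_eq_range (ha : a ≠ 0) (hb : b ≠ 0)
    (X : Matrix n p K) (M : Matrix p n K) :
    LinearMap.ker (fromBlocks 0 (fromRows X (a • 1 : Matrix p p K))
        (fromCols (b • M) (-b • 1 : Matrix p p K)) 0).mulVecLin =
      LinearMap.range (fromRows (fromRows 1 M) 0 : Matrix ((n ⊕ p) ⊕ p) n K).mulVecLin := by
  ext x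
  obtain ⟨v, w, d, rfl⟩ : ∃ v w d, x = Sum.elim (Sum.elim v w) d :=
    ⟨_, _, _, by rw [Sum.elim_comp_inl_inr, Sum.elim_comp_inl_inr]⟩
  rw [LinearMap.mem_ker, LinearMap.mem_range, mulVecLin_apply,
    fromBlocks_zero_zero_mulVec_sumElim, ← Sum.elim_zero_zero, Sum.elim_eq_iff,
    fromRows_smul_one_mulVec_eq_zero_iff ha,
    fromCols_smul_neg_smul_one_mulVec_sumElim_eq_zero_iff hb]
  simp only [mulVecLin_apply, fromRows_mulVec, one_mulVec, zero_mulVec, Sum.elim_eq_iff]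
  constructor
  · rintro ⟨rfl, rfl⟩
    exact ⟨v, ⟨rfl, rfl⟩, rfl⟩
  · rintro ⟨v, ⟨rfl, rfl⟩, rfl⟩
    exact ⟨rfl, rfl⟩

theorem finrank_ker_mulVecLin_fromBlocks (ha : a ≠ 0) (hb : b ≠ 0)
    (X : Matrix n p K) (M : Matrix p n K) :
    Module.finrank K (LinearMap.ker (fromBlocks 0 (fromRows X (a • 1 : Matrix p p K))
        (fromCols (b • M) (-b • 1 : Matrix p p K)) 0).mulVecLin) = Fintype.card n := by
  rw [ker_mulVecLin_fromBlocks_eq_range ha hb,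
    LinearMap.finrank_range_of_inj (injective_mulVecLin_fromRows_fromRows_one M),
    Module.finrank_fintype_fun_eq_card]

end Matrix

theorem statement7_general (n : ℕ) (ℓ c : ℝ) (hℓ : 0 < ℓ) (hc : 0 < c)
    (f : Fin n → ℝ) :
    Module.finrank ℝ (LinearMap.ker (marxA0 n ℓ c f).mulVecLin) = n := by
  rw [marxA0, finrank_ker_mulVecLin_fromBlocks (by positivity) (by positivity), Fintype.card_fin]

/-- the kernel of `A₀` (as a linear map on `ℝ^{3n+2}`) has
dimension exactly `n`, i.e. the eigenvalue `0` of `A₀` has geometric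
multiplicity `n`. -/
theorem statement7 (n : ℕ) (hn : 1 ≤ n) (ℓ c : ℝ) (hℓ : 0 < ℓ) (hc : 0 < c)
    (f : Fin n → ℝ) (hf : ∀ i, 0 < f i) :
    Module.finrank ℝ (LinearMap.ker (marxA0 n ℓ c f).mulVecLin) = n :=
  statement7_general n ℓ c hℓ hc f

end
end

section
/- Let n ≥ 1 and let α₁, …, αₙ be distinct positive even integers. Then ∑_{j=1}^{n} 1/(αⱼ² − 1) ≤ n/(2n+1) < 1/2. -/
lemma aux11 : ∀ (n : ℕ) (S : Finset ℕ), S.card = n → (∀ s ∈ S, 1 ≤ s) →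
    ∑ s ∈ S, (1:ℝ)/(4*(s:ℝ)^2-1) ≤ (n:ℝ) / (2*(n:ℝ)+1) := by
  intro n
  induction n with
  | zero =>
    intro S hc _
    rw [Finset.card_eq_zero.mp hc]
    simp
  | succ k ih =>
    intro S hc hposS
    have hne : S.Nonempty := by rw [← Finset.card_pos, hc]; omega
    set m := S.max' hne with hm
    have hmS : m ∈ S := S.max'_mem hne
    have hsub : S ⊆ Finset.Icc 1 m := by
      intro s hs
      exact Finset.mem_Icc.mpr ⟨hposS s hs, S.le_max' s hs⟩
    have hcard_le : k + 1 ≤ m := by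
      have := Finset.card_le_card hsub
      rw [hc, Nat.card_Icc] at this
      omega
    have hsum := Finset.sum_erase_add S (fun s => (1:ℝ)/(4*(s:ℝ)^2-1)) hmS
    have hih := ih (S.erase m) (by simp [Finset.card_erase_of_mem hmS, hc])
      (fun s hs => hposS s (Finset.mem_of_mem_erase hs))
    have hmR : (k:ℝ) + 1 ≤ (m:ℝ) := by exact_mod_cast hcard_le
    have hden : (0:ℝ) < 4*((k:ℝ)+1)^2 - 1 := by nlinarith [Nat.cast_nonneg (α := ℝ) k]
    have hfm : (1:ℝ)/(4*(m:ℝ)^2-1) ≤ 1/(4*((k:ℝ)+1)^2-1) := by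
      apply one_div_le_one_div_of_le hden
      nlinarith [Nat.cast_nonneg (α := ℝ) k]
    have hk0 : (0:ℝ) ≤ (k:ℝ) := Nat.cast_nonneg k
    have hkey : (k:ℝ)/(2*(k:ℝ)+1) + 1/(4*((k:ℝ)+1)^2-1) = ((k:ℝ)+1)/(2*((k:ℝ)+1)+1) := by
      have h1 : (2*(k:ℝ)+1) ≠ 0 := by positivity
      have h2 : (4*((k:ℝ)+1)^2-1) ≠ 0 := ne_of_gt hden
      have h3 : (2*((k:ℝ)+1)+1) ≠ 0 := by positivity
      field_simp
      ring
    calc ∑ s ∈ S, (1:ℝ)/(4*(s:ℝ)^2-1)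
        = (∑ s ∈ S.erase m, (1:ℝ)/(4*(s:ℝ)^2-1)) + 1/(4*(m:ℝ)^2-1) := hsum.symm
      _ ≤ (k:ℝ)/(2*(k:ℝ)+1) + 1/(4*((k:ℝ)+1)^2-1) := add_le_add hih hfm
      _ = ((k:ℝ)+1)/(2*((k:ℝ)+1)+1) := hkey
      _ = ((k+1 : ℕ):ℝ)/(2*((k+1:ℕ):ℝ)+1) := by push_cast; ring_nf

/-- if `α₁, …, αₙ` are distinct positive even integers, then
`∑_{j=1}^{n} 1/(αⱼ² − 1) ≤ n/(2n+1) < 1/2`. -/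
theorem statement11 (n : ℕ) (hn : 1 ≤ n) (α : Fin n → ℕ)
    (hdist : Function.Injective α) (hpos : ∀ i, 0 < α i) (heven : ∀ i, Even (α i)) :
    (∑ j, (1 : ℝ) / ((α j : ℝ) ^ 2 - 1) ≤ (n : ℝ) / (2 * (n : ℝ) + 1)) ∧
    (n : ℝ) / (2 * (n : ℝ) + 1) < 1 / 2 := by
  constructor
  · set β : Fin n → ℕ := fun i => α i / 2 with hβ
    have hαβ : ∀ i, α i = 2 * β i := by
      intro i
      have := (heven i).two_dvd
      simp only [hβ]
      omega
    have hβinj : Function.Injective β := by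
      intro i j hij
      apply hdist
      rw [hαβ i, hαβ j, hij]
    have hβpos : ∀ i, 1 ≤ β i := by
      intro i
      have := hpos i
      have := hαβ i
      omega
    have hrw : ∀ i, (1 : ℝ) / ((α i : ℝ) ^ 2 - 1) = 1/(4*((β i : ℝ))^2-1) := by
      intro i
      rw [hαβ i]
      push_cast
      ring_nf
    calc ∑ j, (1 : ℝ) / ((α j : ℝ) ^ 2 - 1)
        = ∑ j, (1:ℝ)/(4*((β j : ℝ))^2-1) := by simp_rw [hrw]
      _ = ∑ s ∈ Finset.univ.image β, (1:ℝ)/(4*(s:ℝ)^2-1) := by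
          rw [Finset.sum_image (fun i _ j _ h => hβinj h)]
      _ ≤ (n:ℝ)/(2*(n:ℝ)+1) := by
          apply aux11
          · rw [Finset.card_image_of_injective _ hβinj, Finset.card_univ, Fintype.card_fin]
          · intro s hs
            obtain ⟨i, _, rfl⟩ := Finset.mem_image.mp hs
            exact hβpos i
  · rw [div_lt_div_iff₀ (by positivity) (by norm_num)]
    have : (1:ℝ) ≤ n := by exact_mod_cast hn
    linarith
end

section
/- Let n ≥ 1, let P ∈ ℝ^{n×n} be a symmetric positive definite matrix, and let D = diag(d₁, …, dₙ) be a diagonal matrix with each dᵢ ∈ {1, −1}. If every complex eigenvalue of the matrix P·D is a positive real number, then D = Iₙ (i.e., dᵢ = 1 for all i). -/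
/-!
Write `P = Q * Q` with `Q = √P` symmetric and invertible. Then `P * D = Q * (Q * D)` has the same
characteristic polynomial as the symmetric matrix `Q * D * Q`, whose eigenvalues are therefore
positive, so `Q * D * Q` is positive semidefinite. Conjugating back by `Q⁻¹`, so is `D`, which
forces every `dᵢ = 1`.
-/

open Matrix Polynomial
open scoped ComplexOrder

namespace Matrix

variable {n 𝕜 : Type*} [Fintype n] [DecidableEq n] [RCLike 𝕜]

lemma IsHermitian.isRoot_charpoly_eigenvalues {A : Matrix n n 𝕜} (hA : A.IsHermitian) (i : n) :
    A.charpoly.IsRoot (hA.eigenvalues i : 𝕜) := by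
  rw [hA.charpoly_eq, IsRoot, eval_prod]
  exact Finset.prod_eq_zero (Finset.mem_univ i) (by simp)

lemma IsHermitian.posSemidef_of_isRoot_charpoly_nonneg {A : Matrix n n 𝕜} (hA : A.IsHermitian)
    (h : ∀ μ : ℝ, A.charpoly.IsRoot (μ : 𝕜) → 0 ≤ μ) : A.PosSemidef :=
  hA.posSemidef_iff_eigenvalues_nonneg.mpr fun i ↦ h _ (hA.isRoot_charpoly_eigenvalues i)

open scoped MatrixOrder in
lemma PosDef.exists_isHermitian_isUnit_mul_self_eq {P : Matrix n n 𝕜} (hP : P.PosDef) :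
    ∃ Q : Matrix n n 𝕜, Q.IsHermitian ∧ IsUnit Q ∧ Q * Q = P := by
  have hQQ : CFC.sqrt P * CFC.sqrt P = P := CFC.sqrt_mul_sqrt_self P hP.posSemidef.nonneg
  refine ⟨CFC.sqrt P, (CFC.sqrt_nonneg P).posSemidef.1, ?_, hQQ⟩
  exact isUnit_of_mul_isUnit_left (by rw [hQQ]; exact hP.isUnit)

end Matrix

theorem statement12_general (n : ℕ) (P : Matrix (Fin n) (Fin n) ℝ)
    (hPos : P.PosDef) (d : Fin n → ℝ)
    (hd : ∀ i, d i = 1 ∨ d i = -1)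
    (heig : ∀ μ : ℂ,
      ((P * Matrix.diagonal d).charpoly.map (algebraMap ℝ ℂ)).IsRoot μ →
        ∃ r : ℝ, 0 < r ∧ μ = (r : ℂ)) :
    Matrix.diagonal d = (1 : Matrix (Fin n) (Fin n) ℝ) := by
  obtain ⟨Q, hQ, hQ_unit, rfl⟩ := hPos.exists_isHermitian_isUnit_mul_self_eq
  have hchar : (Q * Q * diagonal d).charpoly = (Q * diagonal d * Q).charpoly := by
    rw [mul_assoc, charpoly_mul_comm]
  have hQDQ_herm : (Q * diagonal d * Q).IsHermitian := by
    simpa only [hQ.eq] using isHermitian_conjTranspose_mul_mul Q (isHermitian_diagonal d)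
  have hQDQ : (Q * diagonal d * Q).PosSemidef := by
    refine hQDQ_herm.posSemidef_of_isRoot_charpoly_nonneg fun μ hμ ↦ ?_
    obtain ⟨r, hr, hμr⟩ := heig μ (by rw [hchar]; exact hμ.map)
    exact Complex.ofReal_injective hμr ▸ hr.le
  have hD : (diagonal d).PosSemidef := by
    rwa [← hQ_unit.posSemidef_star_left_conjugate_iff, star_eq_conjTranspose, hQ.eq]
  have hd_one : d = 1 := funext fun i ↦
    (hd i).resolve_right fun h ↦ by linarith [posSemidef_diagonal_iff.mp hD i]
  rw [hd_one]
  exact diagonal_one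

/-- if `P` is real symmetric positive definite, `D = diag d` with
each `dᵢ ∈ {1, −1}`, and every complex eigenvalue of `P·D` is a positive real
number, then `D = Iₙ`. -/
theorem statement12 (n : ℕ) (hn : 1 ≤ n) (P : Matrix (Fin n) (Fin n) ℝ)
    (hSymm : P.IsSymm) (hPos : P.PosDef) (d : Fin n → ℝ)
    (hd : ∀ i, d i = 1 ∨ d i = -1)
    (heig : ∀ μ : ℂ,
      ((P * Matrix.diagonal d).charpoly.map (algebraMap ℝ ℂ)).IsRoot μ →
        ∃ r : ℝ, 0 < r ∧ μ = (r : ℂ)) :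
    Matrix.diagonal d = (1 : Matrix (Fin n) (Fin n) ℝ) :=
  statement12_general n P hPos d hd heig
end

section
/- Let n ≥ 1, ℓ > 0, c > 0, and let F = diag(f₁, …, fₙ) with fᵢ > 0. Define T₀ = blockdiag(−√(c/ℓ)·√(F^{−1}), √(c/ℓ)·√(J_{n+1}), √(J_{n+1})) ∈ ℝ^{(3n+2)×(3n+2)} (where square roots of diagonal positive definite matrices are entrywise) and M = √F·Σ·J_{−1}·√(J_{n+1}^{−1}) ∈ ℝ^{n×(n+1)}. Then T₀·A₀·T₀^{−1} = ω₀·[[0_{(2n+1)×(2n+1)}, Q],[−Qᵀ, 0_{(n+1)×(n+1)}]], where Q ∈ ℝ^{(2n+1)×(n+1)} is the vertical stack of M over I_{n+1}. In particular T₀·A₀·T₀^{−1} is skew-symmetric, and consequently every complex eigenvalue of A₀ has zero real part. -/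
open Matrix Polynomial

noncomputable section

/-!
Conjugating by the diagonal matrix `T₀` rescales the entries of `A₀`, and the scalings are chosen
so that the two off-diagonal blocks become `ω₀ Q` and `-ω₀ Qᵀ`. A real skew-symmetric matrix `S`
has purely imaginary spectrum because `i S` is Hermitian, and `A₀` is similar to one.
-/

theorem Matrix.re_eq_zero_of_mem_spectrum_of_conjTranspose_eq_neg {n : Type*} [Fintype n]
    [DecidableEq n] {A : Matrix n n ℂ} (hA : Aᴴ = -A) {μ : ℂ} (hμ : μ ∈ spectrum ℂ A) :
    μ.re = 0 := by
  have hH : (Complex.I • A).IsHermitian := by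
    rw [IsHermitian, conjTranspose_smul, hA, Complex.star_def, Complex.conj_I, neg_smul_neg]
  have hIμ : Complex.I * μ ∈ spectrum ℂ (Complex.I • A) :=
    spectrum.smul_mem_smul_iff (r := Units.mk0 Complex.I Complex.I_ne_zero) |>.mpr hμ
  obtain ⟨x, -, hx⟩ := hH.spectrum_eq_image_range ▸ hIμ
  simpa using (congrArg Complex.im hx).symm

theorem Matrix.re_eq_zero_of_isRoot_charpoly_of_transpose_eq_neg {n : Type*} [Fintype n]
    [DecidableEq n] {S : Matrix n n ℝ} (hS : Sᵀ = -S) {μ : ℂ}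
    (hμ : (S.charpoly.map (algebraMap ℝ ℂ)).IsRoot μ) : μ.re = 0 := by
  refine re_eq_zero_of_mem_spectrum_of_conjTranspose_eq_neg (A := S.map (algebraMap ℝ ℂ)) ?_
    (mem_spectrum_iff_isRoot_charpoly.mpr (by rwa [charpoly_map]))
  ext i j
  have hij : S j i = -S i j := congrFun (congrFun hS i) j
  simp [hij]

theorem Matrix.charpoly_mul_mul_nonsing_inv {n R : Type*} [Fintype n] [DecidableEq n] [CommRing R]
    {T : Matrix n n R} (hT : IsUnit T.det) (A : Matrix n n R) :
    (T * A * T⁻¹).charpoly = A.charpoly := by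
  obtain ⟨U, rfl⟩ := (isUnit_iff_isUnit_det T).mpr hT
  exact charpoly_units_conj U A

theorem Matrix.inv_diagonal_of_ne_zero {K n : Type*} [Field K] [Fintype n] [DecidableEq n]
    {v : n → K} (hv : ∀ i, v i ≠ 0) : (diagonal v)⁻¹ = diagonal v⁻¹ := by
  refine inv_eq_left_inv ?_
  rw [diagonal_mul_diagonal, ← diagonal_one]
  exact congrArg diagonal (funext fun i => inv_mul_cancel₀ (hv i))

theorem Matrix.fromBlocks_mul_fromBlocks_antidiag_eq {α p q : Type*} [Ring α] [Fintype p]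
    [Fintype q] {D : Matrix p p α} {E : Matrix q q α} {R R' : Matrix p q α} {L L' : Matrix q p α}
    (hR : D * R = R' * E) (hL : E * L = L' * D) :
    fromBlocks D 0 0 E * fromBlocks 0 R L 0 = fromBlocks 0 R' L' 0 * fromBlocks D 0 0 E := by
  simp [fromBlocks_multiply, hR, hL]

section Circuit

variable {K : Type*} [Field K] {m k : Type*} [Fintype m] [Fintype k] [DecidableEq m]
  [DecidableEq k]

def skewBlock {p q : Type*} (Q : Matrix p q K) : Matrix (p ⊕ q) (p ⊕ q) K :=
  fromBlocks 0 Q (-Qᵀ) 0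

theorem transpose_skewBlock {p q : Type*} (Q : Matrix p q K) :
    (skewBlock Q)ᵀ = -skewBlock Q := by
  simp [skewBlock, fromBlocks_transpose, fromBlocks_neg]

/-- `A₀` with `F`, `J_{n+1}` and `Σ J_{-1}` replaced by arbitrary `diagonal f`, `diagonal g`
and `S`. -/
def circuitMatrix (ℓ c : K) (f : m → K) (g : k → K) (S : Matrix m k K) :
    Matrix ((m ⊕ k) ⊕ k) ((m ⊕ k) ⊕ k) K :=
  fromBlocks 0 (fromRows (-(1 / c) • (diagonal f * S)) ((1 / c) • 1))
    (fromCols ((1 / ℓ) • ((diagonal g)⁻¹ * Sᵀ)) (-(1 / ℓ) • 1)) 0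

/-- `T₀` in terms of `κ = √(c/ℓ)`, `u = √f` and `v = √g`. -/
def circuitScaling (κ : K) (u : m → K) (v : k → K) : Matrix ((m ⊕ k) ⊕ k) ((m ⊕ k) ⊕ k) K :=
  fromBlocks (fromBlocks (diagonal fun i => -(κ * (u i)⁻¹)) 0 0 (diagonal fun j => κ * v j))
    0 0 (diagonal v)

theorem isUnit_det_circuitScaling {κ : K} (hκ : κ ≠ 0) {u : m → K} (hu : ∀ i, u i ≠ 0)
    {v : k → K} (hv : ∀ j, v j ≠ 0) : IsUnit (circuitScaling κ u v).det := by
  rw [circuitScaling, fromBlocks_diagonal, fromBlocks_diagonal, det_diagonal, isUnit_iff_ne_zero,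
    Finset.prod_ne_zero_iff]
  rintro ((i | j) | j) -
  · simp [hκ, hu i]
  · simp [hκ, hv j]
  · simp [hv j]

theorem circuitScaling_mul_circuitMatrix {ℓ κ : K} (hℓ : ℓ ≠ 0) (hκ : κ ≠ 0) {u : m → K}
    (hu : ∀ i, u i ≠ 0) {v : k → K} (hv : ∀ j, v j ≠ 0) (S : Matrix m k K) :
    circuitScaling κ u v * circuitMatrix ℓ (ℓ * κ ^ 2) (u ^ 2) (v ^ 2) S =
      ((ℓ * κ)⁻¹ • skewBlock (fromRows (diagonal u * S * diagonal v⁻¹) 1)) *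
        circuitScaling κ u v := by
  rw [skewBlock, fromBlocks_smul, smul_zero, smul_zero]
  refine fromBlocks_mul_fromBlocks_antidiag_eq ?_ ?_
  · ext (i | j) j'
    · simp only [fromBlocks_diagonal, diagonal_mul, mul_diagonal, Sum.elim_inl, fromRows_apply_inl,
        Matrix.smul_apply, Pi.pow_apply, Pi.inv_apply, smul_eq_mul]
      field_simp [hu i, hv j']
    · rcases eq_or_ne j j' with rfl | h
      · simp only [fromBlocks_diagonal, diagonal_mul, mul_diagonal, Sum.elim_inr,
          fromRows_apply_inr, Matrix.smul_apply, one_apply_eq, smul_eq_mul]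
        field_simp
      · simp [h]
  · ext j (i | j')
    · simp only [inv_diagonal_of_ne_zero (v := v ^ 2) fun j => pow_ne_zero 2 (hv j),
        fromBlocks_diagonal, diagonal_mul, mul_diagonal, Sum.elim_inl, fromCols_apply_inl,
        fromRows_apply_inl, transpose_apply, Matrix.neg_apply, Matrix.smul_apply, Pi.pow_apply,
        Pi.inv_apply, smul_eq_mul]
      field_simp [hu i, hv j]
    · rcases eq_or_ne j j' with rfl | h
      · simp only [fromBlocks_diagonal, diagonal_mul, mul_diagonal, Sum.elim_inr,
          fromCols_apply_inr, fromRows_apply_inr, transpose_apply, Matrix.neg_apply,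
          Matrix.smul_apply, one_apply_eq, smul_eq_mul]
        field_simp
      · simp [h, Ne.symm h]

theorem circuitScaling_conj_circuitMatrix {ℓ κ : K} (hℓ : ℓ ≠ 0) (hκ : κ ≠ 0) {u : m → K}
    (hu : ∀ i, u i ≠ 0) {v : k → K} (hv : ∀ j, v j ≠ 0) (S : Matrix m k K) :
    circuitScaling κ u v * circuitMatrix ℓ (ℓ * κ ^ 2) (u ^ 2) (v ^ 2) S *
        (circuitScaling κ u v)⁻¹ =
      (ℓ * κ)⁻¹ • skewBlock (fromRows (diagonal u * S * diagonal v⁻¹) 1) := by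
  rw [circuitScaling_mul_circuitMatrix hℓ hκ hu hv,
    mul_nonsing_inv_cancel_right _ _ (isUnit_det_circuitScaling hκ hu hv)]

end Circuit

theorem Real.sqrt_mul_eq_mul_sqrt_div {ℓ : ℝ} (hℓ : 0 < ℓ) (c : ℝ) :
    √(ℓ * c) = ℓ * √(c / ℓ) := by
  rw [← Real.sqrt_sq hℓ.le, ← Real.sqrt_mul (sq_nonneg ℓ), Real.sqrt_sq hℓ.le]
  field_simp

section Real

variable {m k : Type*} [Fintype m] [Fintype k] [DecidableEq m] [DecidableEq k] {ℓ c : ℝ}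
  {f : m → ℝ} {g : k → ℝ}

theorem isUnit_det_circuitScaling_sqrt (hℓ : 0 < ℓ) (hc : 0 < c) (hf : ∀ i, 0 < f i)
    (hg : ∀ j, 0 < g j) :
    IsUnit (circuitScaling √(c / ℓ) (fun i => √(f i)) (fun j => √(g j))).det :=
  isUnit_det_circuitScaling (Real.sqrt_pos.mpr (div_pos hc hℓ)).ne'
    (fun i => (Real.sqrt_pos.mpr (hf i)).ne') (fun j => (Real.sqrt_pos.mpr (hg j)).ne')

theorem circuitScaling_sqrt_conj_circuitMatrix (hℓ : 0 < ℓ) (hc : 0 < c) (hf : ∀ i, 0 < f i)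
    (hg : ∀ j, 0 < g j) (S : Matrix m k ℝ) :
    circuitScaling √(c / ℓ) (fun i => √(f i)) (fun j => √(g j)) * circuitMatrix ℓ c f g S *
        (circuitScaling √(c / ℓ) (fun i => √(f i)) (fun j => √(g j)))⁻¹ =
      (1 / √(ℓ * c)) • skewBlock
        (fromRows (diagonal (fun i => √(f i)) * S * diagonal (fun j => √(g j)⁻¹)) 1) := by
  have hc' : ℓ * √(c / ℓ) ^ 2 = c := by
    rw [Real.sq_sqrt (div_pos hc hℓ).le]
    field_simp
  have hf' : (fun i => √(f i)) ^ 2 = f := funext fun i => Real.sq_sqrt (hf i).le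
  have hg' : (fun j => √(g j)) ^ 2 = g := funext fun j => Real.sq_sqrt (hg j).le
  rw [show circuitMatrix ℓ c f g S = circuitMatrix ℓ (ℓ * √(c / ℓ) ^ 2) ((fun i => √(f i)) ^ 2)
      ((fun j => √(g j)) ^ 2) S by rw [hc', hf', hg'],
    circuitScaling_conj_circuitMatrix hℓ.ne' (Real.sqrt_pos.mpr (div_pos hc hℓ)).ne'
    (fun i => (Real.sqrt_pos.mpr (hf i)).ne') (fun j => (Real.sqrt_pos.mpr (hg j)).ne'),
    Real.sqrt_mul_eq_mul_sqrt_div hℓ, one_div]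
  simp only [Real.sqrt_inv]
  rfl

end Real

theorem marxA0_eq_circuitMatrix (n : ℕ) (ℓ c : ℝ) (f : Fin n → ℝ) :
    marxA0 n ℓ c f = circuitMatrix ℓ c f (fun j : Fin (n + 1) => if (j : ℕ) = n then (n : ℝ) else 1)
      (marxSigma n * marxJm n) := by
  rw [marxA0, circuitMatrix, transpose_mul, marxJm, diagonal_transpose]
  simp only [Matrix.mul_assoc]
  rfl

/-- with
`T₀ = blockdiag(−√(c/ℓ)·√(F⁻¹), √(c/ℓ)·√(J_{n+1}), √(J_{n+1}))` and
`M = √F·Σ·J_{−1}·√(J_{n+1}⁻¹)`, one has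
`T₀·A₀·T₀⁻¹ = ω₀·[[0, Q],[−Qᵀ, 0]]` where `Q` stacks `M` over `I_{n+1}`;
in particular `T₀·A₀·T₀⁻¹` is skew-symmetric and every complex eigenvalue of
`A₀` has zero real part. -/
theorem statement14 (n : ℕ) (hn : 1 ≤ n) (ℓ c : ℝ) (hℓ : 0 < ℓ) (hc : 0 < c)
    (f : Fin n → ℝ) (hf : ∀ i, 0 < f i)
    (ω₀ : ℝ) (hω₀ : ω₀ = 1 / Real.sqrt (ℓ * c))
    (T₀ : Matrix ((Fin n ⊕ Fin (n + 1)) ⊕ Fin (n + 1))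
      ((Fin n ⊕ Fin (n + 1)) ⊕ Fin (n + 1)) ℝ)
    (hT₀ : T₀ = Matrix.fromBlocks
      (Matrix.fromBlocks
        (Matrix.diagonal fun i => -(Real.sqrt (c / ℓ) * Real.sqrt ((f i)⁻¹))) 0 0
        (Matrix.diagonal fun j : Fin (n + 1) =>
          Real.sqrt (c / ℓ) * Real.sqrt (if (j : ℕ) = n then (n : ℝ) else 1)))
      0 0
      (Matrix.diagonal fun j : Fin (n + 1) => Real.sqrt (if (j : ℕ) = n then (n : ℝ) else 1)))
    (M : Matrix (Fin n) (Fin (n + 1)) ℝ)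
    (hM : M = Matrix.diagonal (fun i => Real.sqrt (f i)) * marxSigma n * marxJm n *
      Matrix.diagonal (fun j : Fin (n + 1) => Real.sqrt ((if (j : ℕ) = n then (n : ℝ) else 1)⁻¹))) :
    T₀ * marxA0 n ℓ c f * T₀⁻¹ =
      ω₀ • Matrix.fromBlocks 0
        (Matrix.fromRows M (1 : Matrix (Fin (n + 1)) (Fin (n + 1)) ℝ))
        (-(Matrix.fromRows M (1 : Matrix (Fin (n + 1)) (Fin (n + 1)) ℝ))ᵀ) 0 ∧
    (T₀ * marxA0 n ℓ c f * T₀⁻¹)ᵀ = -(T₀ * marxA0 n ℓ c f * T₀⁻¹) ∧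
    (∀ μ : ℂ, ((marxA0 n ℓ c f).charpoly.map (algebraMap ℝ ℂ)).IsRoot μ →
      μ.re = 0) := by
  set g : Fin (n + 1) → ℝ := fun j => if (j : ℕ) = n then (n : ℝ) else 1
  have hg j : 0 < g j := by
    simp only [g]
    split_ifs
    exacts [Nat.cast_pos.mpr hn, one_pos]
  have hT : T₀ = circuitScaling √(c / ℓ) (fun i => √(f i)) (fun j => √(g j)) := by
    rw [hT₀]
    simp only [Real.sqrt_inv]
    rfl
  have hM' : M = diagonal (fun i => √(f i)) * (marxSigma n * marxJm n) *
      diagonal (fun j => √(g j)⁻¹) := by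
    rw [hM]
    simp only [Matrix.mul_assoc]
    rfl
  have hconj : T₀ * marxA0 n ℓ c f * T₀⁻¹ =
      ω₀ • skewBlock (fromRows M (1 : Matrix (Fin (n + 1)) (Fin (n + 1)) ℝ)) := by
    rw [hT, marxA0_eq_circuitMatrix, circuitScaling_sqrt_conj_circuitMatrix hℓ hc hf hg, hω₀, hM']
  have hskew : (T₀ * marxA0 n ℓ c f * T₀⁻¹)ᵀ = -(T₀ * marxA0 n ℓ c f * T₀⁻¹) := by
    rw [hconj, transpose_smul, transpose_skewBlock, smul_neg]
  refine ⟨hconj, hskew, fun μ hμ => ?_⟩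
  rw [← charpoly_mul_mul_nonsing_inv (hT ▸ isUnit_det_circuitScaling_sqrt hℓ hc hf hg)] at hμ
  exact re_eq_zero_of_isRoot_charpoly_of_transpose_eq_neg hskew hμ

end
end
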